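/- arXiv:1709.01850 — 2 statements merged into one kernel-verified Lean document; each statement's English description precedes it below -/
import Mathlib

section
/- For bounded linear operators A and X on a complex Hilbert space, w(AX + XA*) ≤ 2‖A‖ w(X). -/
/-!
Expanding the quadratic form gives `⟪(AX + XA*)x, x⟫ = ⟪Xx, A*x⟫ + ⟪X(A*x), x⟫`. By polarization,
`⟪Xu, v⟫ + ⟪Xv, u⟫ = (⟪X(u+v), u+v⟫ - ⟪X(u-v), u-v⟫) / 2`, which together with the parallelogram law
bounds it by `w(X) (‖u‖² + ‖v‖²)`; rescaling `u` optimizes this to `2 w(X) ‖u‖ ‖v‖`.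
With `u = x`, `v = A*x` and `‖A*‖ = ‖A‖` this is the claim.
-/

open scoped InnerProductSpace
open ContinuousLinearMap Metric

/-- The numerical radius of a bounded operator on a complex Hilbert space. -/
noncomputable def numRadius {H : Type*} [NormedAddCommGroup H] [InnerProductSpace ℂ H]
    (T : H →L[ℂ] H) : ℝ :=
  sSup {r : ℝ | ∃ x : H, ‖x‖ = 1 ∧ r = ‖(inner ℂ (T x) x : ℂ)‖}

/-- The block operator `[[0, X], [Y, 0]]` acting on `H ⊕ H` (with the `ℓ²` Hilbert space
structure) by `(x, y) ↦ (X y, Y x)`. -/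
noncomputable def blockOp {H : Type*} [NormedAddCommGroup H] [InnerProductSpace ℂ H]
    (X Y : H →L[ℂ] H) : WithLp 2 (H × H) →L[ℂ] WithLp 2 (H × H) :=
  ((WithLp.prodContinuousLinearEquiv 2 ℂ H H).symm.toContinuousLinearMap) ∘L
    ((X ∘L ContinuousLinearMap.snd ℂ H H).prod (Y ∘L ContinuousLinearMap.fst ℂ H H)) ∘L
    ((WithLp.prodContinuousLinearEquiv 2 ℂ H H).toContinuousLinearMap)

/-- `A` is a `G₁` operator: `‖(z - A)⁻¹‖ = 1 / dist (z, σ(A))` for all `z ∉ σ(A)`. -/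
def IsG1 {H : Type*} [NormedAddCommGroup H] [InnerProductSpace ℂ H] [CompleteSpace H]
    (A : H →L[ℂ] H) : Prop :=
  ∀ z : ℂ, z ∉ spectrum ℂ A →
    ‖Ring.inverse (algebraMap ℂ (H →L[ℂ] H) z - A)‖ = 1 / Metric.infDist z (spectrum ℂ A)

/-- The distance between two subsets of `ℂ`. -/
noncomputable def setDist (s t : Set ℂ) : ℝ :=
  sInf {d : ℝ | ∃ z ∈ s, ∃ w ∈ t, d = dist z w}

/-- The Riesz–Dunford functional calculus `f(A)` for `f` analytic on the unit disk and
`σ(A) ⊂ 𝔻`, realized through the Taylor expansion of `f` at `0`. -/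
noncomputable def dunford {H : Type*} [NormedAddCommGroup H] [InnerProductSpace ℂ H]
    [CompleteSpace H] (f : ℂ → ℂ) (A : H →L[ℂ] H) : H →L[ℂ] H :=
  ∑' n : ℕ, (iteratedDeriv n f 0 / n.factorial) • A ^ n

/-- The modulus `|C| = (C*C)^{1/2}` of a bounded operator. -/
noncomputable def opAbs {H : Type*} [NormedAddCommGroup H] [InnerProductSpace ℂ H]
    [CompleteSpace H] (C : H →L[ℂ] H) : H →L[ℂ] H :=
  CFC.sqrt (ContinuousLinearMap.adjoint C * C)

section NumRadius

variable {H : Type*} [NormedAddCommGroup H] [InnerProductSpace ℂ H]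

lemma numRadius_bddAbove (X : H →L[ℂ] H) :
    BddAbove {r : ℝ | ∃ x : H, ‖x‖ = 1 ∧ r = ‖⟪X x, x⟫_ℂ‖} := by
  refine ⟨‖X‖, fun r ⟨x, hx, hr⟩ => ?_⟩
  calc r = ‖⟪X x, x⟫_ℂ‖ := hr
    _ ≤ ‖X x‖ * ‖x‖ := norm_inner_le_norm _ _
    _ ≤ ‖X‖ * ‖x‖ * ‖x‖ := by gcongr; exact X.le_opNorm x
    _ = ‖X‖ := by rw [hx]; ring

lemma norm_inner_le_numRadius (X : H →L[ℂ] H) {x : H} (hx : ‖x‖ = 1) :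
    ‖⟪X x, x⟫_ℂ‖ ≤ numRadius X :=
  le_csSup (numRadius_bddAbove X) ⟨x, hx, rfl⟩

lemma numRadius_nonneg (X : H →L[ℂ] H) : 0 ≤ numRadius X :=
  Real.sSup_nonneg fun _ ⟨_, _, hr⟩ => hr ▸ norm_nonneg _

lemma norm_inner_self_le_numRadius_mul_sq (X : H →L[ℂ] H) (y : H) :
    ‖⟪X y, y⟫_ℂ‖ ≤ numRadius X * ‖y‖ ^ 2 := by
  rcases eq_or_ne y 0 with rfl | hy
  · simp
  have hny : 0 < ‖y‖ := norm_pos_iff.mpr hy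
  have hscale :
      ⟪X ((‖y‖⁻¹ : ℂ) • y), (‖y‖⁻¹ : ℂ) • y⟫_ℂ = ((‖y‖ ^ 2)⁻¹ : ℝ) * ⟪X y, y⟫_ℂ := by
    rw [map_smul, inner_smul_left, inner_smul_right, map_inv₀, Complex.conj_ofReal]
    push_cast
    ring
  have h := norm_inner_le_numRadius X (x := (‖y‖⁻¹ : ℂ) • y) (norm_smul_inv_norm hy)
  rw [hscale, norm_mul, Complex.norm_real, Real.norm_of_nonneg (by positivity)] at h
  rwa [inv_mul_le_iff₀ (by positivity), mul_comm] at h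

lemma norm_inner_add_inner_le_numRadius_mul (X : H →L[ℂ] H) (u v : H) :
    ‖⟪X u, v⟫_ℂ + ⟪X v, u⟫_ℂ‖ ≤ numRadius X * (‖u‖ ^ 2 + ‖v‖ ^ 2) := by
  have polarization : ⟪X (u + v), u + v⟫_ℂ - ⟪X (u - v), u - v⟫_ℂ
      = 2 * (⟪X u, v⟫_ℂ + ⟪X v, u⟫_ℂ) := by
    simp only [map_add, map_sub, inner_add_left, inner_add_right, inner_sub_left,
      inner_sub_right]
    ring
  have parallelogram : ‖u + v‖ ^ 2 + ‖u - v‖ ^ 2 = 2 * (‖u‖ ^ 2 + ‖v‖ ^ 2) := by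
    have := parallelogram_law_with_norm ℂ u v
    nlinarith
  have h : 2 * ‖⟪X u, v⟫_ℂ + ⟪X v, u⟫_ℂ‖ ≤ numRadius X * (‖u + v‖ ^ 2 + ‖u - v‖ ^ 2) := by
    calc 2 * ‖⟪X u, v⟫_ℂ + ⟪X v, u⟫_ℂ‖
        = ‖⟪X (u + v), u + v⟫_ℂ - ⟪X (u - v), u - v⟫_ℂ‖ := by
          rw [polarization, norm_mul, Complex.norm_ofNat]
      _ ≤ ‖⟪X (u + v), u + v⟫_ℂ‖ + ‖⟪X (u - v), u - v⟫_ℂ‖ := norm_sub_le _ _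
      _ ≤ _ := by
          rw [mul_add]
          exact add_le_add (norm_inner_self_le_numRadius_mul_sq X _)
            (norm_inner_self_le_numRadius_mul_sq X _)
  rw [parallelogram] at h
  linarith

lemma norm_inner_add_inner_le_two_mul_numRadius (X : H →L[ℂ] H) (u v : H) :
    ‖⟪X u, v⟫_ℂ + ⟪X v, u⟫_ℂ‖ ≤ 2 * numRadius X * ‖u‖ * ‖v‖ := by
  rcases eq_or_ne u 0 with rfl | hu
  · simp
  rcases eq_or_ne v 0 with rfl | hv
  · simp
  have hnu : 0 < ‖u‖ := norm_pos_iff.mpr hu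
  have hnv : 0 < ‖v‖ := norm_pos_iff.mpr hv
  -- rescaling `u` by `t = ‖v‖ / ‖u‖` equalizes the two norms
  set t : ℝ := ‖v‖ / ‖u‖
  have htu : t * ‖u‖ = ‖v‖ := div_mul_cancel₀ _ hnu.ne'
  have h := norm_inner_add_inner_le_numRadius_mul X ((t : ℂ) • u) v
  rw [map_smul, inner_smul_left, inner_smul_right, Complex.conj_ofReal, ← mul_add, norm_mul,
    norm_smul, Complex.norm_real, Real.norm_of_nonneg (by positivity), htu,
    div_mul_eq_mul_div, div_le_iff₀ hnu] at h
  refine le_of_mul_le_mul_left ?_ hnv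
  linarith

end NumRadius

theorem stmt1 {H : Type*} [NormedAddCommGroup H] [InnerProductSpace ℂ H] [CompleteSpace H] (A X : H →L[ℂ] H) :
    numRadius (A * X + X * ContinuousLinearMap.adjoint A) ≤ 2 * ‖A‖ * numRadius X := by
  refine Real.sSup_le ?_ (by have := numRadius_nonneg X; positivity)
  rintro r ⟨x, hx, rfl⟩
  have hexpand : ⟪(A * X + X * adjoint A) x, x⟫_ℂ
      = ⟪X x, adjoint A x⟫_ℂ + ⟪X (adjoint A x), x⟫_ℂ := by
    change ⟪A (X x) + X (adjoint A x), x⟫_ℂ = _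
    rw [inner_add_left, adjoint_inner_right]
  have hadj : ‖adjoint A x‖ ≤ ‖A‖ := by
    simpa [hx] using (adjoint A).le_opNorm x
  calc ‖⟪(A * X + X * adjoint A) x, x⟫_ℂ‖
      ≤ 2 * numRadius X * ‖x‖ * ‖adjoint A x‖ := by
        rw [hexpand]; exact norm_inner_add_inner_le_two_mul_numRadius X x _
    _ ≤ 2 * ‖A‖ * numRadius X := by
        rw [hx]; have := numRadius_nonneg X; nlinarith
end

section
/- For bounded linear operators A, B, X, Y on a complex Hilbert space, the numerical radius of the 2×2 block operator matrix with zero diagonal, (1,2)-entry AXB*, and (2,1)-entry BYA*, is at most max{‖A‖², ‖B‖²} times the numerical radius of the block operator matrix with zero diagonal, (1,2)-entry X and (2,1)-entry Y. -/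
/-!
Writing `D = diag(A, B)` on `H ⊕ H`, the operator `[[0, A X B*], [B Y A*, 0]]` is `D T D*` with
`T = [[0, X], [Y, 0]]`. Since `⟨D T D* z, z⟩ = ⟨T (D* z), D* z⟩`, conjugation scales the numerical
radius by at most `‖D‖²`, and `‖D‖ = max ‖A‖ ‖B‖` for the `ℓ²` norm on `H ⊕ H`.
-/

open scoped InnerProductSpace
open ContinuousLinearMap Metric

section NumRadius

variable {E : Type*} [NormedAddCommGroup E] [InnerProductSpace ℂ E]

lemma bddAbove_numRadius_set (T : E →L[ℂ] E) :
    BddAbove {r : ℝ | ∃ x : E, ‖x‖ = 1 ∧ r = ‖(⟪T x, x⟫_ℂ : ℂ)‖} := by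
  refine ⟨‖T‖, ?_⟩
  rintro r ⟨x, hx, rfl⟩
  calc ‖(⟪T x, x⟫_ℂ : ℂ)‖ ≤ ‖T x‖ * ‖x‖ := norm_inner_le_norm _ _
    _ ≤ ‖T‖ := by simpa [hx] using T.le_opNorm x

lemma numRadius_nonneg_s4 (T : E →L[ℂ] E) : 0 ≤ numRadius T :=
  Real.sSup_nonneg (by rintro r ⟨x, -, rfl⟩; positivity)

lemma norm_inner_le_numRadius_mul_sq (T : E →L[ℂ] E) (z : E) :
    ‖(⟪T z, z⟫_ℂ : ℂ)‖ ≤ numRadius T * ‖z‖ ^ 2 := by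
  rcases eq_or_ne z 0 with rfl | hz
  · simp
  have hz' : 0 < ‖z‖ := norm_pos_iff.mpr hz
  set x : E := ((‖z‖ : ℂ))⁻¹ • z
  have hx : ‖x‖ = 1 := by
    simp only [x, norm_smul, norm_inv, Complex.norm_real, norm_norm, inv_mul_cancel₀ hz'.ne']
  have hxz : ‖(⟪T x, x⟫_ℂ : ℂ)‖ = ‖(⟪T z, z⟫_ℂ : ℂ)‖ / ‖z‖ ^ 2 := by
    simp only [x, map_smul, inner_smul_left, inner_smul_right, norm_mul, RCLike.norm_conj,
      norm_inv, Complex.norm_real, norm_norm]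
    field_simp
  have hle : ‖(⟪T x, x⟫_ℂ : ℂ)‖ ≤ numRadius T := le_csSup (bddAbove_numRadius_set T) ⟨x, hx, rfl⟩
  rwa [hxz, div_le_iff₀ (by positivity)] at hle

variable {F : Type*} [NormedAddCommGroup F] [InnerProductSpace ℂ F] [CompleteSpace E]
  [CompleteSpace F]

lemma numRadius_comp_comp_adjoint_le (C : E →L[ℂ] F) (T : E →L[ℂ] E) :
    numRadius (C ∘L T ∘L adjoint C) ≤ ‖C‖ ^ 2 * numRadius T := by
  refine Real.sSup_le ?_ (mul_nonneg (sq_nonneg _) (numRadius_nonneg_s4 T))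
  rintro r ⟨z, hz, rfl⟩
  have hCz : ‖adjoint C z‖ ≤ ‖C‖ := by
    simpa [hz] using (adjoint C).le_opNorm z
  calc ‖(⟪C (T (adjoint C z)), z⟫_ℂ : ℂ)‖ = ‖(⟪T (adjoint C z), adjoint C z⟫_ℂ : ℂ)‖ := by
        rw [adjoint_inner_right]
    _ ≤ numRadius T * ‖adjoint C z‖ ^ 2 := norm_inner_le_numRadius_mul_sq T _
    _ ≤ ‖C‖ ^ 2 * numRadius T := by
        rw [mul_comm]
        gcongr
        exact numRadius_nonneg_s4 T

end NumRadius

section BlockDiag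

variable {E F : Type*} [NormedAddCommGroup E] [InnerProductSpace ℂ E]
  [NormedAddCommGroup F] [InnerProductSpace ℂ F]

noncomputable def blockDiag (A : E →L[ℂ] E) (B : F →L[ℂ] F) :
    WithLp 2 (E × F) →L[ℂ] WithLp 2 (E × F) :=
  (WithLp.prodContinuousLinearEquiv 2 ℂ E F).symm.toContinuousLinearMap ∘L A.prodMap B ∘L
    (WithLp.prodContinuousLinearEquiv 2 ℂ E F).toContinuousLinearMap

lemma blockDiag_fst (A : E →L[ℂ] E) (B : F →L[ℂ] F) (z : WithLp 2 (E × F)) :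
    (blockDiag A B z).fst = A z.fst := rfl

lemma blockDiag_snd (A : E →L[ℂ] E) (B : F →L[ℂ] F) (z : WithLp 2 (E × F)) :
    (blockDiag A B z).snd = B z.snd := rfl

lemma norm_blockDiag_le (A : E →L[ℂ] E) (B : F →L[ℂ] F) :
    ‖blockDiag A B‖ ≤ max ‖A‖ ‖B‖ := by
  refine opNorm_le_bound _ (by positivity) fun z ↦ ?_
  refine (pow_le_pow_iff_left₀ (norm_nonneg _) (by positivity) two_ne_zero).mp ?_
  have hA : ‖A z.fst‖ ≤ max ‖A‖ ‖B‖ * ‖z.fst‖ :=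
    (A.le_opNorm _).trans (by gcongr; exact le_max_left _ _)
  have hB : ‖B z.snd‖ ≤ max ‖A‖ ‖B‖ * ‖z.snd‖ :=
    (B.le_opNorm _).trans (by gcongr; exact le_max_right _ _)
  rw [WithLp.prod_norm_sq_eq_of_L2, mul_pow, WithLp.prod_norm_sq_eq_of_L2, blockDiag_fst,
    blockDiag_snd, mul_add]
  gcongr <;> rw [← mul_pow] <;> gcongr

lemma sq_norm_blockDiag_le (A : E →L[ℂ] E) (B : F →L[ℂ] F) :
    ‖blockDiag A B‖ ^ 2 ≤ max (‖A‖ ^ 2) (‖B‖ ^ 2) := by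
  have hmax : max ‖A‖ ‖B‖ ^ 2 = max (‖A‖ ^ 2) (‖B‖ ^ 2) :=
    (pow_left_monotoneOn (M₀ := ℝ) (n := 2)).map_max (norm_nonneg A) (norm_nonneg B)
  rw [← hmax]
  gcongr
  exact norm_blockDiag_le A B

variable [CompleteSpace E] [CompleteSpace F]

lemma adjoint_blockDiag (A : E →L[ℂ] E) (B : F →L[ℂ] F) :
    adjoint (blockDiag A B) = blockDiag (adjoint A) (adjoint B) := by
  refine ((eq_adjoint_iff _ _).mpr fun x y ↦ ?_).symm
  exact congrArg₂ (· + ·) (adjoint_inner_left A _ _) (adjoint_inner_left B _ _)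

end BlockDiag

lemma blockOp_eq_blockDiag_comp {H : Type*} [NormedAddCommGroup H] [InnerProductSpace ℂ H]
    [CompleteSpace H] (A B X Y : H →L[ℂ] H) :
    blockOp (A * X * adjoint B) (B * Y * adjoint A) =
      blockDiag A B ∘L blockOp X Y ∘L adjoint (blockDiag A B) := by
  rw [adjoint_blockDiag]
  rfl

theorem stmt4 {H : Type*} [NormedAddCommGroup H] [InnerProductSpace ℂ H] [CompleteSpace H] (A B X Y : H →L[ℂ] H) :
    numRadius (blockOp (A * X * ContinuousLinearMap.adjoint B)
        (B * Y * ContinuousLinearMap.adjoint A)) ≤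
      max (‖A‖ ^ 2) (‖B‖ ^ 2) * numRadius (blockOp X Y) := by
  rw [blockOp_eq_blockDiag_comp]
  calc _ ≤ ‖blockDiag A B‖ ^ 2 * numRadius (blockOp X Y) := numRadius_comp_comp_adjoint_le _ _
    _ ≤ max (‖A‖ ^ 2) (‖B‖ ^ 2) * numRadius (blockOp X Y) := by
        gcongr
        · exact numRadius_nonneg_s4 _
        · exact sq_norm_blockDiag_le A B
end
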